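/- Suppose the TIN-optimality conditions (O1) and (O2) hold. Then the general TIN-achievable GDoF region equals the polyhedron achieved with the identity decoding order: P* = P_id(𝒦), the set of all d ∈ ℝ_{≥0}^𝒦 satisfying the TIN cyclic system for the identity decoding order. (This is the achievable-region identity asserted in Theorem 4 of the paper, whose full statement additionally identifies this region with the optimal GDoF region of the Gaussian IMAC.) -/

import Mathlib

open Finset

/-- The set of users `𝒦`: a cell `k : Fin K` together with a user index in `Fin (L k)`. -/
abbrev User {K : ℕ} (L : Fin K → ℕ) := (k : Fin K) × Fin (L k)

/-- The cyclically previous index in `Fin m` (i.e. `j - 1` modulo `m`). -/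
def prevIdx {m : ℕ} (j : Fin m) : Fin m :=
  ⟨(j.val + (m - 1)) % m, Nat.mod_lt _ j.pos⟩

/-- The cyclically next index in `Fin m` (i.e. `j + 1` modulo `m`). -/
def nextIdx {m : ℕ} (j : Fin m) : Fin m :=
  ⟨(j.val + 1) % m, Nat.mod_lt _ j.pos⟩

/-- The identity decoding order. -/
def idOrder {K : ℕ} (L : Fin K → ℕ) : (k : Fin K) → Equiv.Perm (Fin (L k)) :=
  fun _ => Equiv.refl _

/-- The term `max({0} ∪ {r_k^{[π_k(l')]} + α_{kk}^{[π_k(l')]} : l' < l, (π_k(l'),k) ∈ S}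
∪ {r_j^{[l_j]} + α_{jk}^{[l_j]} : (l_j,j) ∈ S, j ≠ k})` in the polyhedral TIN constraints
(expressed as a supremum of the corresponding finite nonempty set of reals). -/
noncomputable def innerMax {K : ℕ} (L : Fin K → ℕ)
    (α : (k : Fin K) → Fin (L k) → Fin K → ℝ)
    (π : (k : Fin K) → Equiv.Perm (Fin (L k)))
    (S : Set (User L)) (r : (k : Fin K) → Fin (L k) → ℝ)
    (k : Fin K) (l : Fin (L k)) : ℝ :=
  sSup (insert (0 : ℝ)
    ({x : ℝ | ∃ l' : Fin (L k), l' < l ∧ (⟨k, π k l'⟩ : User L) ∈ S ∧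
        x = r k (π k l') + α k (π k l') k} ∪
     {x : ℝ | ∃ (j : Fin K) (lj : Fin (L j)), j ≠ k ∧ (⟨j, lj⟩ : User L) ∈ S ∧
        x = r j lj + α j lj k}))

/-- The polyhedral TIN region `P_π(S)`: `d` is nonnegative, vanishes outside `S`, and is
realized by some power allocation `r ≤ 0` on `S`. -/
def polyTIN {K : ℕ} (L : Fin K → ℕ)
    (α : (k : Fin K) → Fin (L k) → Fin K → ℝ)
    (π : (k : Fin K) → Equiv.Perm (Fin (L k)))
    (S : Set (User L))
    (d : (k : Fin K) → Fin (L k) → ℝ) : Prop :=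
  (∀ (k : Fin K) (l : Fin (L k)), 0 ≤ d k l) ∧
  (∀ (k : Fin K) (l : Fin (L k)), (⟨k, l⟩ : User L) ∉ S → d k l = 0) ∧
  ∃ r : (k : Fin K) → Fin (L k) → ℝ,
    (∀ (k : Fin K) (l : Fin (L k)), (⟨k, l⟩ : User L) ∈ S → r k l ≤ 0) ∧
    (∀ (k : Fin K) (l : Fin (L k)), (⟨k, π k l⟩ : User L) ∈ S →
      d k (π k l) ≤ r k (π k l) + α k (π k l) k - innerMax L α π S r k l)

/-- The TIN-achievable region `P*_π` for decoding order `π`: as `P_π(𝒦)` but with the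
positive part `max(0, ·)` of the upper bound. -/
def starTIN {K : ℕ} (L : Fin K → ℕ)
    (α : (k : Fin K) → Fin (L k) → Fin K → ℝ)
    (π : (k : Fin K) → Equiv.Perm (Fin (L k)))
    (d : (k : Fin K) → Fin (L k) → ℝ) : Prop :=
  (∀ (k : Fin K) (l : Fin (L k)), 0 ≤ d k l) ∧
  ∃ r : (k : Fin K) → Fin (L k) → ℝ,
    (∀ (k : Fin K) (l : Fin (L k)), r k l ≤ 0) ∧
    (∀ (k : Fin K) (l : Fin (L k)),
      d k (π k l) ≤ max 0 (r k (π k l) + α k (π k l) k - innerMax L α π Set.univ r k l))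

/-- The TIN cyclic system of GDoF inequalities for decoding order `π`:
(i) per-cell MAC-type bounds, and (ii) cyclic bounds over sequences of distinct cells. -/
def cyclicSystem {K : ℕ} (L : Fin K → ℕ)
    (α : (k : Fin K) → Fin (L k) → Fin K → ℝ)
    (π : (k : Fin K) → Equiv.Perm (Fin (L k)))
    (d : (k : Fin K) → Fin (L k) → ℝ) : Prop :=
  (∀ (k : Fin K) (l : Fin (L k)),
      ∑ s ∈ Finset.Iic l, d k (π k s) ≤ α k (π k l) k) ∧
  (∀ m : ℕ, 2 ≤ m → m ≤ K → ∀ c : Fin m → Fin K, Function.Injective c →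
    ∀ lsel : (j : Fin m) → Fin (L (c j)),
      ∑ j, (∑ s ∈ Finset.Iic (lsel j), d (c j) (π (c j) s)) ≤
      ∑ j, (α (c j) (π (c j) (lsel j)) (c j) -
            α (c j) (π (c j) (lsel j)) (c (prevIdx j))))

/-!
Under (O1) and (O2) every TIN-achievable tuple, for any decoding order, satisfies the cyclic
system for the identity order. Within a cell, successive decoding bounds the sum rate of the
users up to `l` by the excess of their strongest level over the interference floor. Along a
cycle of cells, (O2) lets the interference a cell causes at its predecessor be charged to the
predecessor's gap `α_ii - α_i,prev`, (O1) makes that gap monotone in the user index, and the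
charges telescope around the cycle.

Conversely, the cyclic system says that the complete digraph on the cells, with the edge
`q → i` weighted by `max_l (∑_{s ≤ l} d_q^s - α_qq^l + α_qi^l)`, has no positive simple cycle.
The longest simple path ending at `k` is then a potential `p k`, and the power levels
`r_k^l = ∑_{s ≤ l} d_k^s - α_kk^l + p k` realize `d` in `P_id(𝒦)`.
-/

lemma prevIdx_val {m : ℕ} (j : Fin m) :
    (prevIdx j : ℕ) = if (j : ℕ) = 0 then m - 1 else j - 1 := by
  have hj := j.isLt
  change ((j : ℕ) + (m - 1)) % m = _
  split_ifs with h
  · rw [h, zero_add]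
    exact Nat.mod_eq_of_lt (by omega)
  · rw [show (j : ℕ) + (m - 1) = (j - 1) + m by omega, Nat.add_mod_right]
    exact Nat.mod_eq_of_lt (by omega)

lemma prevIdx_injective {m : ℕ} : Function.Injective (prevIdx (m := m)) := by
  intro a b h
  have hab := congrArg Fin.val h
  rw [prevIdx_val, prevIdx_val] at hab
  have := a.isLt
  have := b.isLt
  ext
  split_ifs at hab <;> omega

lemma prevIdx_ne_self {m : ℕ} (hm : 2 ≤ m) (j : Fin m) : prevIdx j ≠ j := by
  intro h
  have hj := congrArg Fin.val h
  rw [prevIdx_val] at hj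
  have := j.isLt
  split_ifs at hj <;> omega

@[simp]
lemma prevIdx_zero {n : ℕ} : prevIdx (0 : Fin (n + 1)) = Fin.last n := by
  ext
  simp [prevIdx_val]

@[simp]
lemma prevIdx_succ {n : ℕ} (i : Fin n) : prevIdx i.succ = i.castSucc := by
  ext
  simp [prevIdx_val]

lemma sum_comp_prevIdx {m : ℕ} {M : Type*} [AddCommMonoid M] (f : Fin m → M) :
    ∑ j, f (prevIdx j) = ∑ j, f j :=
  Fintype.sum_bijective _ (Finite.injective_iff_bijective.mp prevIdx_injective) _ _ fun _ => rfl

section Potential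

variable {V : Type*} (w : V → V → ℝ)

/-- The weight of the path `vₙ → ⋯ → v₁ → v₀` encoded by the list `[v₀, v₁, …, vₙ]`. -/
def pathWeight : List V → ℝ
  | a :: b :: t => w b a + pathWeight (b :: t)
  | _ => 0

lemma pathWeight_append_cons (l₁ : List V) (a : V) (l₂ : List V) :
    pathWeight w (l₁ ++ a :: l₂) = pathWeight w (l₁ ++ [a]) + pathWeight w (a :: l₂) := by
  induction l₁ with
  | nil => simp [pathWeight]
  | cons x l₁ ih =>
    cases l₁ with
    | nil => simp [pathWeight]
    | cons y l₁ =>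
      simp only [List.cons_append, pathWeight] at ih ⊢
      rw [ih]
      ring

lemma pathWeight_cons_eq_sum (a : V) (t : List V) :
    pathWeight w (a :: t) = ∑ i : Fin t.length, w t[i] (a :: t)[i] := by
  induction t generalizing a with
  | nil => simp [pathWeight]
  | cons b t ih =>
    rw [pathWeight, ih]
    exact (Fin.sum_univ_succ fun i : Fin (t.length + 1) => w (b :: t)[i] (a :: b :: t)[i]).symm

lemma sum_prevIdx_eq_pathWeight (a : V) (t : List V) :
    ∑ j : Fin (t.length + 1), w (a :: t)[j] (a :: t)[prevIdx j] =
      w a (a :: t)[t.length] + pathWeight w (a :: t) := by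
  rw [pathWeight_cons_eq_sum, Fin.sum_univ_succ]
  simp

/-- The simple cycle `b → ⋯ → a → b` is encoded as the path `a :: (t ++ [b])` closed by the
edge `a → b`. -/
def NoPositiveCycle : Prop :=
  ∀ (a b : V) (t : List V), (a :: (t ++ [b])).Nodup → pathWeight w (a :: (t ++ [b])) + w a b ≤ 0

lemma noPositiveCycle_of_sum_prevIdx_nonpos
    (h : ∀ m, 2 ≤ m → ∀ c : Fin m → V, Function.Injective c →
      ∑ j, w (c j) (c (prevIdx j)) ≤ 0) :
    NoPositiveCycle w := by
  intro a b t ht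
  have hsum := h ((t ++ [b]).length + 1) (by simp) (fun j => (a :: (t ++ [b]))[j])
    (List.nodup_iff_injective_get.mp ht)
  rw [sum_prevIdx_eq_pathWeight] at hsum
  simpa [add_comm] using hsum

noncomputable def potential (k : V) : ℝ :=
  ⨆ t : {t : List V // (k :: t).Nodup}, pathWeight w (k :: t.1)

lemma potential_le {k : V} {b : ℝ} (h : ∀ t, (k :: t).Nodup → pathWeight w (k :: t) ≤ b) :
    potential w k ≤ b :=
  have : Nonempty {t : List V // (k :: t).Nodup} := ⟨⟨[], List.nodup_singleton k⟩⟩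
  ciSup_le fun t => h t.1 t.2

lemma pathWeight_le_potential [Finite V] {k : V} {t : List V} (ht : (k :: t).Nodup) :
    pathWeight w (k :: t) ≤ potential w k := by
  have := Fintype.ofFinite V
  have : Finite {t : List V // (k :: t).Nodup} :=
    Finite.of_injective (fun t => (⟨t.1, t.2.of_cons⟩ : {l : List V // l.Nodup}))
      fun x y h => Subtype.ext (by simpa using h)
  exact le_ciSup (f := fun t : {t : List V // (k :: t).Nodup} => pathWeight w (k :: t.1))
    (Set.finite_range _).bddAbove ⟨t, ht⟩

lemma potential_nonneg [Finite V] (k : V) : 0 ≤ potential w k := by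
  simpa [pathWeight] using pathWeight_le_potential w (List.nodup_singleton k)

variable {w}

lemma potential_le_of_neg_le {k : V} {b : ℝ} (hw : NoPositiveCycle w) (hb : 0 ≤ b)
    (hwk : ∀ i, i ≠ k → -b ≤ w k i) : potential w k ≤ b := by
  refine potential_le w fun t ht => ?_
  rcases List.eq_nil_or_concat t with rfl | ⟨t, i, rfl⟩
  · simpa [pathWeight] using hb
  · rw [List.concat_eq_append] at ht ⊢
    have hik : i ≠ k := by
      rintro rfl
      simp at ht
    linarith [hw k i t ht, hwk i hik]

lemma potential_add_le [Finite V] (hw : NoPositiveCycle w) {q k : V} (hqk : q ≠ k) :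
    potential w q + w q k ≤ potential w k := by
  suffices potential w q ≤ potential w k - w q k by linarith
  refine potential_le w fun t ht => ?_
  by_cases hk : k ∈ t
  · -- the path passes through `k`; its segment from `k` to `q`, closed by `q → k`, is a cycle
    obtain ⟨pre, suf, rfl⟩ := List.append_of_mem hk
    have hcycle := hw q k pre (ht.sublist (by simp))
    have hsuf := pathWeight_le_potential w
      (ht.sublist ((List.sublist_append_right pre (k :: suf)).cons q))
    have hsplit := pathWeight_append_cons w (q :: pre) k suf
    simp only [List.cons_append] at hsplit
    linarith
  · have hnd : (k :: q :: t).Nodup := List.nodup_cons.mpr ⟨by simp [hqk.symm, hk], ht⟩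
    have hext := pathWeight_le_potential w hnd
    simp only [pathWeight] at hext
    linarith

end Potential

section InnerMax

variable {K : ℕ} {L : Fin K → ℕ} {α : (k : Fin K) → Fin (L k) → Fin K → ℝ}
  {π : (k : Fin K) → Equiv.Perm (Fin (L k))} {S : Set (User L)}
  {r : (k : Fin K) → Fin (L k) → ℝ} {k : Fin K} {l : Fin (L k)}

lemma bddAbove_innerMax_set : BddAbove (insert (0 : ℝ)
    ({x : ℝ | ∃ l' : Fin (L k), l' < l ∧ (⟨k, π k l'⟩ : User L) ∈ S ∧
        x = r k (π k l') + α k (π k l') k} ∪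
     {x : ℝ | ∃ (j : Fin K) (lj : Fin (L j)), j ≠ k ∧ (⟨j, lj⟩ : User L) ∈ S ∧
        x = r j lj + α j lj k})) := by
  refine (((Set.finite_range fun l' => r k (π k l') + α k (π k l') k).union
    (Set.finite_range fun u : User L => r u.1 u.2 + α u.1 u.2 k)).insert 0).bddAbove.mono ?_
  rintro x (rfl | ⟨l', -, -, rfl⟩ | ⟨j, lj, -, -, rfl⟩)
  · exact Set.mem_insert _ _
  · exact Set.mem_insert_of_mem _ (Or.inl ⟨l', rfl⟩)
  · exact Set.mem_insert_of_mem _ (Or.inr ⟨⟨j, lj⟩, rfl⟩)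

lemma zero_le_innerMax : 0 ≤ innerMax L α π S r k l :=
  le_csSup bddAbove_innerMax_set (Set.mem_insert _ _)

lemma le_innerMax_of_lt {l' : Fin (L k)} (hl' : l' < l) (hS : (⟨k, π k l'⟩ : User L) ∈ S) :
    r k (π k l') + α k (π k l') k ≤ innerMax L α π S r k l :=
  le_csSup bddAbove_innerMax_set (Set.mem_insert_of_mem _ (Or.inl ⟨l', hl', hS, rfl⟩))

lemma le_innerMax_of_ne {j : Fin K} {lj : Fin (L j)} (hj : j ≠ k) (hS : (⟨j, lj⟩ : User L) ∈ S) :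
    r j lj + α j lj k ≤ innerMax L α π S r k l :=
  le_csSup bddAbove_innerMax_set (Set.mem_insert_of_mem _ (Or.inr ⟨j, lj, hj, hS, rfl⟩))

lemma innerMax_le {c : ℝ} (h0 : 0 ≤ c)
    (hcell : ∀ l', l' < l → (⟨k, π k l'⟩ : User L) ∈ S → r k (π k l') + α k (π k l') k ≤ c)
    (hcross : ∀ j (lj : Fin (L j)), j ≠ k → (⟨j, lj⟩ : User L) ∈ S → r j lj + α j lj k ≤ c) :
    innerMax L α π S r k l ≤ c := by
  refine csSup_le ⟨0, Set.mem_insert _ _⟩ ?_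
  rintro x (rfl | ⟨l', hl', hS, rfl⟩ | ⟨j, lj, hj, hS, rfl⟩)
  · exact h0
  · exact hcell l' hl' hS
  · exact hcross j lj hj hS

end InnerMax

section StarTIN

variable {K : ℕ} {L : Fin K → ℕ} {α : (k : Fin K) → Fin (L k) → Fin K → ℝ}
  {π : (k : Fin K) → Equiv.Perm (Fin (L k))} {r d : (k : Fin K) → Fin (L k) → ℝ}
  {k : Fin K} {C : ℝ}

lemma cell_sum_le_fold_max_sub
    (hd : ∀ t, d k (π k t) ≤
      max 0 (r k (π k t) + α k (π k t) k - innerMax L α π Set.univ r k t))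
    (hC : ∀ t, C ≤ innerMax L α π Set.univ r k t) (T : Finset (Fin (L k))) :
    ∑ s ∈ T, d k s ≤ T.fold max C (fun s => r k s + α k s k) - C := by
  classical
  induction T using Finset.induction_on_max_value (fun s => (π k).symm s) with
  | empty => simp
  | insert a T haT hbefore ih =>
    -- `a` is decoded last, so `innerMax` at `a` dominates the levels of all of `T`
    set x := fun s => r k s + α k s k
    set F := T.fold max C x
    set M := innerMax L α π Set.univ r k ((π k).symm a)
    have hFM : F ≤ M := by
      refine (Finset.fold_max_le M).mpr ⟨hC _, fun s hs => ?_⟩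
      have hlt : (π k).symm s < (π k).symm a :=
        (hbefore s hs).lt_of_ne fun h => haT ((π k).symm.injective h ▸ hs)
      simpa using le_innerMax_of_lt (α := α) (π := π) (r := r) hlt (Set.mem_univ _)
    have hda : d k a ≤ max 0 (x a - M) := by simpa using hd ((π k).symm a)
    have hstep : max 0 (x a - M) ≤ max (x a) F - F :=
      max_le (by linarith [le_max_right (x a) F]) (by linarith [le_max_left (x a) F])
    rw [Finset.sum_insert haT, Finset.fold_insert haT]
    linarith

lemma cell_sum_le_sub
    (hd : ∀ t, d k (π k t) ≤
      max 0 (r k (π k t) + α k (π k t) k - innerMax L α π Set.univ r k t))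
    (hC : ∀ t, C ≤ innerMax L α π Set.univ r k t) (T : Finset (Fin (L k))) {D : ℝ}
    (hCD : C ≤ D) (hT : ∀ s ∈ T, r k s + α k s k ≤ D) :
    ∑ s ∈ T, d k s ≤ D - C := by
  linarith [cell_sum_le_fold_max_sub hd hC T, (Finset.fold_max_le D).mpr ⟨hCD, hT⟩]

end StarTIN

section Optimality

variable {K : ℕ} {L : Fin K → ℕ} {α : (k : Fin K) → Fin (L k) → Fin K → ℝ}

lemma sub_cross_monotone_of_O1
    (hα : ∀ (k : Fin K) (l : Fin (L k)) (i : Fin K), 0 ≤ α k l i)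
    (hO1 : ∀ (i j : Fin K), j ≠ i → ∀ (l' l : Fin (L i)), l' < l →
      α i l' i + min (α i l j) (2 * α i l j - α i l' j) ≤ α i l i)
    {i p : Fin K} (hp : p ≠ i) {s t : Fin (L i)} (hst : s ≤ t) :
    α i s i - α i s p ≤ α i t i - α i t p := by
  rcases hst.lt_or_eq with hst | rfl
  · have := hO1 i p hp s t hst
    have : α i t p - α i s p ≤ min (α i t p) (2 * α i t p - α i s p) :=
      le_min (by linarith [hα i s p]) (by linarith [hα i t p])
    linarith
  · rfl

lemma cycle_sum_le_of_cell_bounds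
    (hα : ∀ (k : Fin K) (l : Fin (L k)) (i : Fin K), 0 ≤ α k l i)
    (hO1 : ∀ (i j : Fin K), j ≠ i → ∀ (l' l : Fin (L i)), l' < l →
      α i l' i + min (α i l j) (2 * α i l j - α i l' j) ≤ α i l i)
    (hO2 : ∀ (i : Fin K) (li : Fin (L i)) (j : Fin K), j ≠ i →
      ∀ (k : Fin K), k ≠ i → ∀ (lk : Fin (L k)),
      α i li j + α k lk i ≤ α i li i)
    {π : (k : Fin K) → Equiv.Perm (Fin (L k))} {r d : (k : Fin K) → Fin (L k) → ℝ}
    (hr : ∀ k l, r k l ≤ 0)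
    (hd : ∀ k t, d k (π k t) ≤
      max 0 (r k (π k t) + α k (π k t) k - innerMax L α π Set.univ r k t))
    {m : ℕ} (hm : 2 ≤ m) {c : Fin m → Fin K} (hc : Function.Injective c)
    (lsel : (j : Fin m) → Fin (L (c j))) :
    ∑ j, ∑ s ∈ Finset.Iic (lsel j), d (c j) s ≤
      ∑ j, (α (c j) (lsel j) (c j) - α (c j) (lsel j) (c (prevIdx j))) := by
  -- The interference `u j` that cell `c j` causes at its predecessor is charged to the
  -- predecessor's gap `G`; the `u`'s then telescope around the cycle.
  set u : Fin m → ℝ := fun j =>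
    (Finset.Iic (lsel j)).fold max 0 fun s => r (c j) s + α (c j) s (c (prevIdx j))
  set G : Fin m → ℝ := fun j => α (c j) (lsel j) (c j) - α (c j) (lsel j) (c (prevIdx j))
  have hne : ∀ j, c (prevIdx j) ≠ c j := fun j h => prevIdx_ne_self hm j (hc h)
  have hu_nonneg : ∀ j, 0 ≤ u j := fun j => (Finset.le_fold_max 0).mpr (Or.inl le_rfl)
  have hG_nonneg : ∀ j, 0 ≤ G j := fun j => by
    linarith [hO2 (c j) (lsel j) _ (hne j) _ (hne j) (lsel (prevIdx j)),
      hα (c (prevIdx j)) (lsel (prevIdx j)) (c j)]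
  have hu_le_G : ∀ j, u j ≤ G (prevIdx j) := fun j =>
    (Finset.fold_max_le _).mpr ⟨hG_nonneg _, fun s _ => by
      linarith [hO2 (c (prevIdx j)) (lsel (prevIdx j)) _ (hne (prevIdx j)) (c j) (hne j).symm s,
        hr (c j) s]⟩
  have hu_le_innerMax : ∀ j t, u j ≤ innerMax L α π Set.univ r (c (prevIdx j)) t := fun j _ =>
    (Finset.fold_max_le _).mpr
      ⟨zero_le_innerMax, fun s _ => le_innerMax_of_ne (hne j).symm (Set.mem_univ _)⟩
  have hcell : ∀ j, ∑ s ∈ Finset.Iic (lsel (prevIdx j)), d (c (prevIdx j)) s ≤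
      u (prevIdx j) + G (prevIdx j) - u j := fun j =>
    cell_sum_le_sub (hd _) (hu_le_innerMax j) _
      (by linarith [hu_le_G j, hu_nonneg (prevIdx j)]) fun s hs => by
        have hgap := sub_cross_monotone_of_O1 hα hO1 (hne (prevIdx j)) (Finset.mem_Iic.mp hs)
        have hu : r (c (prevIdx j)) s + α (c (prevIdx j)) s (c (prevIdx (prevIdx j))) ≤
            u (prevIdx j) := (Finset.le_fold_max _).mpr (Or.inr ⟨s, hs, le_rfl⟩)
        linarith
  calc ∑ j, ∑ s ∈ Finset.Iic (lsel j), d (c j) s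
      = ∑ j, ∑ s ∈ Finset.Iic (lsel (prevIdx j)), d (c (prevIdx j)) s :=
        (sum_comp_prevIdx fun j => ∑ s ∈ Finset.Iic (lsel j), d (c j) s).symm
    _ ≤ ∑ j, (u (prevIdx j) + G (prevIdx j) - u j) := Finset.sum_le_sum fun j _ => hcell j
    _ = ∑ j, G j := by
        rw [Finset.sum_sub_distrib, Finset.sum_add_distrib, sum_comp_prevIdx u,
          sum_comp_prevIdx G]
        ring

theorem cyclicSystem_id_of_starTIN
    (hα : ∀ (k : Fin K) (l : Fin (L k)) (i : Fin K), 0 ≤ α k l i)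
    (hmono : ∀ k : Fin K, Monotone (fun l : Fin (L k) => α k l k))
    (hO1 : ∀ (i j : Fin K), j ≠ i → ∀ (l' l : Fin (L i)), l' < l →
      α i l' i + min (α i l j) (2 * α i l j - α i l' j) ≤ α i l i)
    (hO2 : ∀ (i : Fin K) (li : Fin (L i)) (j : Fin K), j ≠ i →
      ∀ (k : Fin K), k ≠ i → ∀ (lk : Fin (L k)),
      α i li j + α k lk i ≤ α i li i)
    {π : (k : Fin K) → Equiv.Perm (Fin (L k))} {d : (k : Fin K) → Fin (L k) → ℝ}
    (hd : starTIN L α π d) :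
    cyclicSystem L α (idOrder L) d := by
  obtain ⟨-, r, hr, hd⟩ := hd
  simp only [cyclicSystem, idOrder, Equiv.refl_apply]
  refine ⟨fun k l => ?_, fun m hm _ c hc lsel =>
    cycle_sum_le_of_cell_bounds hα hO1 hO2 hr hd hm hc lsel⟩
  simpa using cell_sum_le_sub (hd k) (fun _ => zero_le_innerMax) (Finset.Iic l) (hα k l k)
    fun s hs => by linarith [hr k s, hmono k (Finset.mem_Iic.mp hs)]

end Optimality

section CyclicSystem

variable {K : ℕ} {L : Fin K → ℕ} {α : (k : Fin K) → Fin (L k) → Fin K → ℝ}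
  {d : (k : Fin K) → Fin (L k) → ℝ}

lemma noPositiveCycle_of_cyclicSystem (hcyc : cyclicSystem L α (idOrder L) d)
    (lsel : (q : Fin K) → Fin K → Fin (L q)) :
    NoPositiveCycle fun q i =>
      ∑ s ∈ Finset.Iic (lsel q i), d q s - α q (lsel q i) q + α q (lsel q i) i := by
  refine noPositiveCycle_of_sum_prevIdx_nonpos _ fun m hm c hc => ?_
  have h := hcyc.2 m hm (by simpa using Fintype.card_le_of_injective c hc) c hc
    fun j => lsel (c j) (c (prevIdx j))
  simp only [idOrder, Equiv.refl_apply] at h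
  rw [← sub_nonpos, ← Finset.sum_sub_distrib] at h
  exact h.trans_eq' (Finset.sum_congr rfl fun j _ => by ring)

theorem polyTIN_id_of_cyclicSystem (hL : ∀ k, 1 ≤ L k)
    (hα : ∀ (k : Fin K) (l : Fin (L k)) (i : Fin K), 0 ≤ α k l i)
    (hd : ∀ (k : Fin K) (l : Fin (L k)), 0 ≤ d k l) (hcyc : cyclicSystem L α (idOrder L) d) :
    polyTIN L α (idOrder L) Set.univ d := by
  have hmac := hcyc.1
  simp only [idOrder, Equiv.refl_apply] at hmac
  set W : (q : Fin K) → Fin (L q) → Fin K → ℝ := fun q l i =>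
    ∑ s ∈ Finset.Iic l, d q s - α q l q + α q l i
  choose lmax _ hlmax using fun q i =>
    Finset.univ.exists_max_image (W q · i) ⟨⟨0, hL q⟩, Finset.mem_univ _⟩
  set w := fun q i => W q (lmax q i) i
  have hw : NoPositiveCycle w := noPositiveCycle_of_cyclicSystem hcyc lmax
  have hpot : ∀ k l, potential w k ≤ α k l k - ∑ s ∈ Finset.Iic l, d k s := fun k l =>
    potential_le_of_neg_le hw (by linarith [hmac k l]) fun i _ => by
      linarith [hlmax k i l (Finset.mem_univ _), hα k l i]
  refine ⟨hd, fun _ _ h => absurd (Set.mem_univ _) h,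
    fun k l => ∑ s ∈ Finset.Iic l, d k s - α k l k + potential w k,
    fun k l _ => by linarith [hpot k l], fun k l _ => ?_⟩
  have hIm : innerMax L α (idOrder L) Set.univ
      (fun k l => ∑ s ∈ Finset.Iic l, d k s - α k l k + potential w k) k l ≤
        ∑ s ∈ Finset.Iio l, d k s + potential w k := by
    refine innerMax_le (add_nonneg (Finset.sum_nonneg fun s _ => hd k s) (potential_nonneg w k))
      (fun l' hl' _ => ?_) fun j lj hjk _ => ?_
    · have : ∑ s ∈ Finset.Iic l', d k s ≤ ∑ s ∈ Finset.Iio l, d k s :=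
        Finset.sum_le_sum_of_subset_of_nonneg
          (fun s hs => Finset.mem_Iio.mpr ((Finset.mem_Iic.mp hs).trans_lt hl'))
          fun s _ _ => hd k s
      simp only [idOrder, Equiv.refl_apply]
      linarith
    · linarith [hlmax j k lj (Finset.mem_univ _), potential_add_le hw hjk,
        Finset.sum_nonneg fun s (_ : s ∈ Finset.Iio l) => hd k s]
  simp only [idOrder, Equiv.refl_apply]
  linarith [Finset.sum_Iio_add_eq_sum_Iic (f := d k) l]

end CyclicSystem

theorem starTIN_of_polyTIN {K : ℕ} {L : Fin K → ℕ} {α : (k : Fin K) → Fin (L k) → Fin K → ℝ}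
    {π : (k : Fin K) → Equiv.Perm (Fin (L k))} {d : (k : Fin K) → Fin (L k) → ℝ}
    (h : polyTIN L α π Set.univ d) : starTIN L α π d := by
  obtain ⟨hd, -, r, hr, hineq⟩ := h
  exact ⟨hd, r, fun k l => hr k l (Set.mem_univ _),
    fun k l => (hineq k l (Set.mem_univ _)).trans (le_max_right _ _)⟩

theorem starTIN_eq_polyTIN_id_of_optimalityConditions_general {K : ℕ}
    (L : Fin K → ℕ) (hL : ∀ k, 1 ≤ L k)
    (α : (k : Fin K) → Fin (L k) → Fin K → ℝ)
    (hα : ∀ (k : Fin K) (l : Fin (L k)) (i : Fin K), 0 ≤ α k l i)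
    (hmono : ∀ k : Fin K, Monotone (fun l : Fin (L k) => α k l k))
    (hO1 : ∀ (i j : Fin K), j ≠ i → ∀ (l' l : Fin (L i)), l' < l →
      α i l' i + min (α i l j) (2 * α i l j - α i l' j) ≤ α i l i)
    (hO2 : ∀ (i : Fin K) (li : Fin (L i)) (j : Fin K), j ≠ i →
      ∀ (k : Fin K), k ≠ i → ∀ (lk : Fin (L k)),
      α i li j + α k lk i ≤ α i li i) :
    ({d : (k : Fin K) → Fin (L k) → ℝ |
        ∃ π : (k : Fin K) → Equiv.Perm (Fin (L k)), starTIN L α π d} =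
      {d : (k : Fin K) → Fin (L k) → ℝ | polyTIN L α (idOrder L) Set.univ d}) ∧
    ({d : (k : Fin K) → Fin (L k) → ℝ | polyTIN L α (idOrder L) Set.univ d} =
      {d : (k : Fin K) → Fin (L k) → ℝ |
        (∀ (k : Fin K) (l : Fin (L k)), 0 ≤ d k l) ∧
          cyclicSystem L α (idOrder L) d}) := by
  have cyclic_of_star {π d} (h : starTIN L α π d) : cyclicSystem L α (idOrder L) d :=
    cyclicSystem_id_of_starTIN hα hmono hO1 hO2 h
  refine ⟨Set.ext fun d => ⟨?_, ?_⟩, Set.ext fun d => ⟨?_, ?_⟩⟩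
  · rintro ⟨π, h⟩
    exact polyTIN_id_of_cyclicSystem hL hα h.1 (cyclic_of_star h)
  · exact fun h => ⟨idOrder L, starTIN_of_polyTIN h⟩
  · exact fun h => ⟨h.1, cyclic_of_star (starTIN_of_polyTIN h)⟩
  · exact fun h => polyTIN_id_of_cyclicSystem hL hα h.1 h.2

/-- **Theorem 4 (achievable-region identity under TIN-optimality conditions).**
Under the TIN-optimality conditions (O1) and (O2), the general TIN-achievable GDoF region
`P* = ∪_π P*_π` equals the polyhedron `P_id(𝒦)` achieved with the identity decoding
order, which is the set of all nonnegative tuples satisfying the TIN cyclic system for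
the identity decoding order. -/
theorem starTIN_eq_polyTIN_id_of_optimalityConditions {K : ℕ} (hK : 1 ≤ K)
    (L : Fin K → ℕ) (hL : ∀ k, 1 ≤ L k)
    (α : (k : Fin K) → Fin (L k) → Fin K → ℝ)
    (hα : ∀ (k : Fin K) (l : Fin (L k)) (i : Fin K), 0 ≤ α k l i)
    (hmono : ∀ k : Fin K, Monotone (fun l : Fin (L k) => α k l k))
    (hO1 : ∀ (i j : Fin K), j ≠ i → ∀ (l' l : Fin (L i)), l' < l →
      α i l' i + min (α i l j) (2 * α i l j - α i l' j) ≤ α i l i)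
    (hO2 : ∀ (i : Fin K) (li : Fin (L i)) (j : Fin K), j ≠ i →
      ∀ (k : Fin K), k ≠ i → ∀ (lk : Fin (L k)),
      α i li j + α k lk i ≤ α i li i) :
    ({d : (k : Fin K) → Fin (L k) → ℝ |
        ∃ π : (k : Fin K) → Equiv.Perm (Fin (L k)), starTIN L α π d} =
      {d : (k : Fin K) → Fin (L k) → ℝ | polyTIN L α (idOrder L) Set.univ d}) ∧
    ({d : (k : Fin K) → Fin (L k) → ℝ | polyTIN L α (idOrder L) Set.univ d} =
      {d : (k : Fin K) → Fin (L k) → ℝ |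
        (∀ (k : Fin K) (l : Fin (L k)), 0 ≤ d k l) ∧
          cyclicSystem L α (idOrder L) d}) :=
  starTIN_eq_polyTIN_id_of_optimalityConditions_general L hL α hα hmono hO1 hO2
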